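/- arXiv:2510.05944 — 6 statements merged into one kernel-verified Lean document; each statement's English description precedes it below -/
import Mathlib

section
/- Let G be a finite simple graph with vertex set V and let f : V → ℝ≥0 be a function that is not identically zero. Then f is unimodal on G if and only if the support supp(f) = {v ∈ V | f(v) > 0} induces a tree in G and, for some vertex v_max ∈ supp(f) at which f attains its maximum value, f is non-increasing away from v_max within the support tree: for every pair of vertices u, w ∈ supp(f) such that u lies on the unique path from v_max to w in the induced tree, one has f(u) ≥ f(w). -/
open SimpleGraph

/-- A set of vertices induces a tree in `G`. -/
def InducesTree {V : Type*} (G : SimpleGraph V) (S : Set V) : Prop :=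
  (G.induce S).IsTree

/-- `f` is unimodal on `G`: every positive superlevel set is empty or induces a tree. -/
def UnimodalOn {V : Type*} (G : SimpleGraph V) (f : V → NNReal) : Prop :=
  ∀ c : NNReal, 0 < c → {v | c ≤ f v} = ∅ ∨ InducesTree G {v | c ≤ f v}

/-!
The superlevel set at the smallest positive value of `f` is the whole support, so unimodality
makes the support a tree. In a forest, the unique path between two vertices of a connected
vertex set stays inside it; applied to the superlevel set `{f ≥ f w}`, which contains the
maximum, this gives `f ≥ f w` along the path from `vmax` to `w`. Conversely, monotonicity along
these paths joins every superlevel set to `vmax` inside itself, and as an induced subgraph of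
the support tree it is acyclic.
-/

theorem Finite.exists_setOf_le_eq_setOf_lt {V α : Type*} [Finite V] [LinearOrder α]
    {f : V → α} {a : α} (h : ∃ v, a < f v) :
    ∃ v, a < f v ∧ {u | f v ≤ f u} = {u | a < f u} := by
  obtain ⟨v, hv, hmin⟩ := Set.exists_min_image {u | a < f u} f (Set.toFinite _) h
  exact ⟨v, hv, Set.ext fun u => ⟨hv.trans_le, hmin u⟩⟩

namespace SimpleGraph

variable {V : Type*} {G : SimpleGraph V} {S T : Set V}

theorem Walk.reachable_induce_of_support_subset {a b : T} (p : (G.induce T).Walk a b)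
    (hp : ∀ u ∈ p.support, ↑u ∈ S) :
    (G.induce S).Reachable ⟨a, hp a p.start_mem_support⟩ ⟨b, hp b p.end_mem_support⟩ :=
  ⟨(p.map (Embedding.induce T).toHom).induce S fun x hx => by
    obtain ⟨y, hy, rfl⟩ := List.mem_map.mp (by rwa [Walk.support_map] at hx)
    exact hp y hy⟩

theorem IsAcyclic.support_subset_of_induce_preconnected (hT : (G.induce T).IsAcyclic)
    (hST : S ⊆ T) (hS : (G.induce S).Preconnected) {a b : T} (ha : ↑a ∈ S) (hb : ↑b ∈ S)
    {p : (G.induce T).Walk a b} (hp : p.IsPath) : ∀ u ∈ p.support, ↑u ∈ S := by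
  classical
  obtain ⟨q⟩ := hS ⟨a, ha⟩ ⟨b, hb⟩
  have hpq : (⟨p, hp⟩ : (G.induce T).Path a b) = (q.map (G.induceHomOfLE hST).toHom).toPath :=
    (hT.subsingleton_path a b).elim _ _
  intro u hu
  have hu' := Walk.support_toPath_subset_support _ (by rw [← hpq]; exact hu)
  rw [Walk.support_map] at hu'
  obtain ⟨x, -, rfl⟩ := List.mem_map.mp hu'
  exact x.2

end SimpleGraph

section

variable {V : Type*} {G : SimpleGraph V} {f : V → NNReal}

theorem UnimodalOn.inducesTree_setOf_le (hU : UnimodalOn G f) {v : V} (hv : 0 < f v) :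
    InducesTree G {u | f v ≤ f u} :=
  (hU _ hv).resolve_left (Set.nonempty_of_mem (s := {u | f v ≤ f u}) (le_refl (f v))).ne_empty

theorem UnimodalOn.inducesTree_support [Finite V] (hU : UnimodalOn G f) (hf : ∃ v, 0 < f v) :
    InducesTree G {u | 0 < f u} := by
  obtain ⟨v, hv, hsupp⟩ := Finite.exists_setOf_le_eq_setOf_lt hf
  exact hsupp ▸ hU.inducesTree_setOf_le hv

theorem UnimodalOn.le_of_mem_support_of_isPath (hU : UnimodalOn G f)
    (hT : (G.induce {u | 0 < f u}).IsAcyclic) {a w : {u | 0 < f u}} (hwa : f w ≤ f a)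
    {p : (G.induce {u | 0 < f u}).Walk a w} (hp : p.IsPath) : ∀ u ∈ p.support, f w ≤ f u :=
  hT.support_subset_of_induce_preconnected (S := {u | f w ≤ f u})
    (fun u (hu : f w ≤ f u) => show 0 < f u from w.2.trans_le hu)
    (hU.inducesTree_setOf_le w.2).connected.preconnected hwa (le_refl (f w)) hp

theorem unimodalOn_of_le_along_paths (hT : InducesTree G {u | 0 < f u})
    (vmax : {u | 0 < f u}) (hmax : ∀ v, f v ≤ f vmax)
    (hmono : ∀ (w : {u | 0 < f u}) (p : (G.induce {u | 0 < f u}).Walk vmax w),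
      p.IsPath → ∀ u ∈ p.support, f w ≤ f u) :
    UnimodalOn G f := by
  intro c hc
  refine (Set.eq_empty_or_nonempty _).imp id fun ⟨v, hv⟩ => ?_
  have hsub : {u | c ≤ f u} ⊆ {u | 0 < f u} := fun _ hu => hc.trans_le hu
  have hvmax : c ≤ f vmax := hv.trans (hmax v)
  have hreach (a : {u | c ≤ f u}) :
      (G.induce {u | c ≤ f u}).Reachable ⟨vmax, hvmax⟩ a := by
    obtain ⟨p, hp, -⟩ := hT.existsUnique_path vmax ⟨a, hsub a.2⟩
    exact Walk.reachable_induce_of_support_subset (S := {u | c ≤ f u}) p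
      fun u hu => (a.2 : c ≤ f a).trans (hmono _ p hp u hu)
  exact ⟨(connected_iff_exists_forall_reachable _).mpr ⟨_, hreach⟩,
    hT.isAcyclic.embedding (G.induceHomOfLE hsub)⟩

end

/-- Characterization of unimodal functions on a finite graph: a not-identically-zero `f`
is unimodal iff its support induces a tree and, for some vertex `v_max` of the support at
which `f` attains its maximum value, `f` is non-increasing away from `v_max` within the
support tree. -/
theorem unimodal_iff_support_tree_and_nonincreasing
    {V : Type*} [Fintype V] (G : SimpleGraph V)
    (f : V → NNReal) (hf : f ≠ 0) :
    UnimodalOn G f ↔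
      (InducesTree G {v | 0 < f v} ∧
        ∃ vmax : {v | 0 < f v},
          (∀ v, f v ≤ f (vmax : V)) ∧
          ∀ (w : {v | 0 < f v}) (p : (G.induce {v | 0 < f v}).Walk vmax w),
            p.IsPath → ∀ u ∈ p.support, f (w : V) ≤ f (u : V)) := by
  obtain ⟨v, hv⟩ : ∃ v, 0 < f v := by simpa [pos_iff_ne_zero, funext_iff] using hf
  refine ⟨fun hU => ?_, fun ⟨hT, vmax, hmax, hmono⟩ =>
    unimodalOn_of_le_along_paths hT vmax hmax hmono⟩
  have hT := hU.inducesTree_support ⟨v, hv⟩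
  have : Nonempty V := ⟨v⟩
  obtain ⟨vmax, hmax⟩ := Finite.exists_max f
  exact ⟨hT, ⟨vmax, hv.trans_le (hmax v)⟩, hmax,
    fun w _ hp => hU.le_of_mem_support_of_isPath hT.isAcyclic (hmax w) hp⟩
end

section
/- Let G = (V, E) be a finite simple graph, let k ≥ 1, and let G̃ be the join of G with the complete graph on a set W of k new vertices. If G admits a proper k-coloring, then there exist k unimodal functions f_1, …, f_k on G̃ such that Σ_{i=1}^{k} f_i(x) = 1 for every vertex x of G̃; that is, the constant function 1 on G̃ has a unimodal decomposition into k components. -/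
open SimpleGraph

/-- Join of `G` with the complete graph on `k` new vertices. -/
def augGraph {V : Type*} (G : SimpleGraph V) (k : ℕ) : SimpleGraph (V ⊕ Fin k) where
  Adj x y :=
    match x, y with
    | Sum.inl u, Sum.inl v => G.Adj u v
    | Sum.inl _, Sum.inr _ => True
    | Sum.inr _, Sum.inl _ => True
    | Sum.inr i, Sum.inr j => i ≠ j
  symm := by
    constructor
    rintro (u | i) (v | j) h
    · exact G.adj_symm h
    · trivial
    · trivial
    · exact Ne.symm h
  loopless := by
    constructor
    rintro (u | i) h
    · exact G.irrefl h
    · exact h rfl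

/-!
On the join, colour the new vertex `i` with `i` itself. The fibre of colour `i` is then a star:
the new vertex `i` is adjacent to every old vertex, while the old vertices of colour `i` form an
independent set of `G`. Taking `f i` to be the indicator of this fibre, each superlevel set is
the fibre or empty, and every vertex lies in exactly one fibre.
-/

lemma unimodalOn_indicator_one {V : Type*} {G : SimpleGraph V} {S : Set V}
    (hS : InducesTree G S) : UnimodalOn G (S.indicator 1) := by
  intro c hc
  by_cases hc1 : c ≤ 1
  · have hlevel : {v | c ≤ S.indicator 1 v} = S := by
      ext v
      by_cases hv : v ∈ S <;> simp [hv, hc1, hc.ne']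
    exact .inr (by rw [hlevel]; exact hS)
  · refine .inl (Set.eq_empty_of_forall_notMem fun v hv => hc1 ?_)
    exact hv.trans (Set.indicator_le_self' (fun _ _ => zero_le_one) v)

lemma inducesTree_insert_of_isIndepSet {α : Type*} {H : SimpleGraph α} {w : α} {T : Set α}
    (hw : ∀ t ∈ T, H.Adj w t) (hT : H.IsIndepSet T) : InducesTree H (insert w T) := by
  have hstar : H.induce (insert w T) = starGraph ⟨w, Set.mem_insert w T⟩ := by
    ext ⟨a, ha⟩ ⟨b, hb⟩
    simp only [comap_adj, Function.Embedding.subtype_apply, starGraph_adj, ne_eq,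
      Subtype.mk.injEq]
    rcases ha with rfl | ha <;> rcases hb with rfl | hb
    · simp
    · exact ⟨fun h => ⟨h.ne, .inl rfl⟩, fun _ => hw b hb⟩
    · exact ⟨fun h => ⟨h.ne, .inr rfl⟩, fun _ => (hw a ha).symm⟩
    · refine ⟨fun h => ⟨h.ne, ?_⟩, fun ⟨hab, hw'⟩ => ?_⟩
      · exact absurd h (hT ha hb h.ne)
      · rcases hw' with rfl | rfl
        exacts [(H.irrefl (hw _ ha)).elim, (H.irrefl (hw _ hb)).elim]
  rw [InducesTree, hstar]
  exact isTree_starGraph _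

lemma inducesTree_augGraph_colorFiber {V : Type*} {G : SimpleGraph V} {k : ℕ}
    (C : G.Coloring (Fin k)) (i : Fin k) :
    InducesTree (augGraph G k) (Sum.elim C id ⁻¹' {i}) := by
  have hfiber : Sum.elim C id ⁻¹' {i} = insert (Sum.inr i) (Sum.inl '' (C ⁻¹' {i})) := by
    ext (v | j) <;> simp [eq_comm]
  rw [hfiber]
  refine inducesTree_insert_of_isIndepSet (by rintro _ ⟨v, -, rfl⟩; trivial) ?_
  rintro _ ⟨u, hu, rfl⟩ _ ⟨v, hv, rfl⟩ - (huv : G.Adj u v)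
  exact C.valid huv (hu.trans hv.symm)

theorem colorable_imp_unimodal_decomposition_of_one_general
    {V : Type*} (G : SimpleGraph V) (k : ℕ)
    (hcol : G.Colorable k) :
    ∃ f : Fin k → (V ⊕ Fin k) → NNReal,
      (∀ i, UnimodalOn (augGraph G k) (f i)) ∧
      ∀ x : V ⊕ Fin k, ∑ i, f i x = 1 := by
  classical
  obtain ⟨C⟩ := hcol
  refine ⟨fun i => (Sum.elim C id ⁻¹' {i}).indicator 1,
    fun i => unimodalOn_indicator_one (inducesTree_augGraph_colorFiber C i), fun x => ?_⟩
  simp [Set.indicator_apply, eq_comm]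

/-- If `G` admits a proper `k`-coloring, then the constant function `1` on the join of
`G` with the complete graph on `k` new vertices has a unimodal decomposition into `k`
components. -/
theorem colorable_imp_unimodal_decomposition_of_one
    {V : Type*} [Fintype V] (G : SimpleGraph V) (k : ℕ) (hk : 1 ≤ k)
    (hcol : G.Colorable k) :
    ∃ f : Fin k → (V ⊕ Fin k) → NNReal,
      (∀ i, UnimodalOn (augGraph G k) (f i)) ∧
      ∀ x : V ⊕ Fin k, ∑ i, f i x = 1 :=
  colorable_imp_unimodal_decomposition_of_one_general G k hcol
end

section
/- Let G = (V, E) be a finite simple graph, let k ≥ 1, and let G̃ be the join of G with the complete graph on a set W of k new vertices. If the vertex set V ⊔ W of G̃ can be covered by k subsets Ṽ_1, …, Ṽ_k (not necessarily disjoint), each of which induces a tree in G̃, then G admits a proper k-coloring. -/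
/-!
Each part induces a tree in the join, so its induced subgraph is 2-colourable. The new vertices
of part `i` form a clique and so take distinct colours, while each old vertex of the part is
adjacent to all of them; hence the old vertices of part `i` need only `2 - wᵢ` colours, `wᵢ`
being the number of new vertices in the part. Giving every part its own palette colours `G`
with `∑ (2 - wᵢ) = 2k - ∑ wᵢ ≤ k` colours, since the parts cover the `k` new vertices.
-/

open SimpleGraph

namespace SimpleGraph

variable {V : Type*} {G : SimpleGraph V}

theorem colorable_sum_of_iUnion_eq_univ {ι : Type*} [Fintype ι] {A : ι → Set V}
    (hA : ⋃ i, A i = Set.univ) {n : ι → ℕ} (hn : ∀ i, (G.induce (A i)).Colorable (n i)) :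
    G.Colorable (∑ i, n i) := by
  have C i : (G.induce (A i)).Coloring (Fin (n i)) := (hn i).some
  have hmem (v : V) : ∃ i, v ∈ A i := Set.mem_iUnion.mp (hA ▸ Set.mem_univ v)
  choose idx hidx using hmem
  have hdiff {u v : V} (huv : G.Adj u v) :
      ∀ i j, i = j → ∀ (hu : u ∈ A i) (hv : v ∈ A j), ¬HEq (C i ⟨u, hu⟩) (C j ⟨v, hv⟩) := by
    rintro i _ rfl hu hv h
    exact (C i).valid (show (G.induce (A i)).Adj ⟨u, hu⟩ ⟨v, hv⟩ from huv) (eq_of_heq h)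
  let D : G.Coloring (Σ i, Fin (n i)) :=
    Coloring.mk (fun v => ⟨idx v, C (idx v) ⟨v, hidx v⟩⟩) fun huv h =>
      hdiff huv _ _ (Sigma.mk.inj_iff.mp h).1 _ _ (Sigma.mk.inj_iff.mp h).2
  simpa using D.colorable

theorem Colorable.of_hom_of_forall_adj {U V' W : Type*} {H : SimpleGraph U}
    {G' : SimpleGraph V'} {n : ℕ} (hH : H.Colorable n) (g : G' →g H) (f : W → U)
    (hf : Pairwise fun i j => H.Adj (f i) (f j)) (hfg : ∀ a i, H.Adj (g a) (f i)) :
    G'.Colorable (n - Nat.card W) := by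
  classical
  obtain ⟨C⟩ := hH
  let free : Set (Fin n) := (Set.range (C ∘ f))ᶜ
  let D : G'.Coloring free :=
    Coloring.mk (fun a => ⟨C (g a), by rintro ⟨i, hi⟩; exact C.valid (hfg a i) hi.symm⟩)
      fun hab h => C.valid (g.map_rel hab) (congrArg Subtype.val h)
  have hcard : Fintype.card free = n - Nat.card W := by
    rw [← Nat.card_eq_fintype_card, Nat.card_coe_set_eq, Set.ncard_compl,
      Set.ncard_range_of_injective (C.injective_comp_of_pairwise_adj f hf), Nat.card_fin]
  exact hcard ▸ D.colorable

end SimpleGraph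

section augGraph

variable {V : Type*} (G : SimpleGraph V) {k : ℕ} (S : Set (V ⊕ Fin k))

lemma pairwise_adj_augGraph_induce_inr :
    Pairwise fun i j : ↥(Sum.inr ⁻¹' S) =>
      ((augGraph G k).induce S).Adj ⟨Sum.inr i, i.2⟩ ⟨Sum.inr j, j.2⟩ :=
  fun _ _ hij => Subtype.coe_injective.ne hij

variable {G S}

lemma ncard_preimage_inr_le_of_colorable {n : ℕ} (h : ((augGraph G k).induce S).Colorable n) :
    (Sum.inr ⁻¹' S).ncard ≤ n := by
  simpa [Nat.card_coe_set_eq] using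
    h.card_le_of_pairwise_adj _ (pairwise_adj_augGraph_induce_inr G S)

lemma colorable_induce_preimage_inl {n : ℕ} (h : ((augGraph G k).induce S).Colorable n) :
    (G.induce (Sum.inl ⁻¹' S)).Colorable (n - (Sum.inr ⁻¹' S).ncard) := by
  let g : G.induce (Sum.inl ⁻¹' S) →g (augGraph G k).induce S :=
    ⟨fun a => ⟨Sum.inl a, a.2⟩, fun hab => hab⟩
  simpa [Nat.card_coe_set_eq] using
    h.of_hom_of_forall_adj g _ (pairwise_adj_augGraph_induce_inr G S) fun _ _ => trivial

end augGraph

theorem colorable_of_tree_cover_general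
    {V : Type*} (G : SimpleGraph V) (k : ℕ)
    (Vs : Fin k → Set (V ⊕ Fin k))
    (htree : ∀ i, InducesTree (augGraph G k) (Vs i))
    (hcover : (⋃ i, Vs i) = Set.univ) :
    G.Colorable k := by
  have hcol i : ((augGraph G k).induce (Vs i)).Colorable 2 := (htree i).colorable_two
  have hle i : (Sum.inr ⁻¹' Vs i).ncard ≤ 2 := ncard_preimage_inr_le_of_colorable (hcol i)
  have hcount : k ≤ ∑ i, (Sum.inr ⁻¹' Vs i).ncard :=
    calc k = (⋃ i, Sum.inr ⁻¹' Vs i).ncard := by simp [← Set.preimage_iUnion, hcover]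
      _ ≤ _ := Set.ncard_iUnion_le_of_fintype _
  have hsum : ∑ i, (2 - (Sum.inr ⁻¹' Vs i).ncard) ≤ k := by
    rw [Finset.sum_tsub_distrib _ fun i _ => hle i]
    simp only [Finset.sum_const, Finset.card_univ, Fintype.card_fin, smul_eq_mul]
    omega
  have hcoverV : ⋃ i, Sum.inl ⁻¹' Vs i = Set.univ := by
    simp [← Set.preimage_iUnion, hcover]
  exact (colorable_sum_of_iUnion_eq_univ hcoverV
    fun i => colorable_induce_preimage_inl (hcol i)).mono hsum

/-- If the vertex set of the join of `G` with the complete graph on `k` new vertices can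
be covered by `k` subsets, each inducing a tree, then `G` admits a proper `k`-coloring. -/
theorem colorable_of_tree_cover
    {V : Type*} [Fintype V] (G : SimpleGraph V) (k : ℕ) (hk : 1 ≤ k)
    (Vs : Fin k → Set (V ⊕ Fin k))
    (htree : ∀ i, InducesTree (augGraph G k) (Vs i))
    (hcover : (⋃ i, Vs i) = Set.univ) :
    G.Colorable k :=
  colorable_of_tree_cover_general G k Vs htree hcover
end

section
/- Let G = (V, E) be a finite simple graph, let k ≥ 1, and let G̃ be the join of G with the complete graph on a set W of k new vertices. Then G admits a proper k-coloring if and only if the vertex set V ⊔ W of G̃ can be covered by k subsets (not necessarily disjoint), each of which induces a tree in G̃. -/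
open SimpleGraph

/-!
For a proper `k`-colouring, the `i`-th new vertex together with the `i`-th colour class induces a
star. Conversely, a tree is 2-colourable and the new vertices form a clique joined to every old
vertex, so a tree of the cover containing `m` new vertices has `m ≤ 2`, and its old vertices need
only `2 - m` colours. The new vertices are covered, so the `m`'s sum to at least `k`, and colouring
each old vertex inside one tree containing it uses at most `∑ (2 - m) ≤ 2k - k` colours.
-/

namespace SimpleGraph

variable {V X : Type*}

theorem isTree_of_forall_adj_center {H : SimpleGraph X} (r : X) (hr : ∀ x, x ≠ r → H.Adj r x)
    (hH : ∀ x y, H.Adj x y → x = r ∨ y = r) : H.IsTree := by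
  convert isTree_starGraph r
  ext x y
  rw [starGraph_adj]
  refine ⟨fun h => ⟨h.ne, hH x y h⟩, ?_⟩
  rintro ⟨hne, rfl | rfl⟩
  · exact hr y hne.symm
  · exact (hr x hne).symm

theorem Colorable.of_iUnion_eq_univ {G : SimpleGraph V} {ι : Type*} [Fintype ι] {S : ι → Set V}
    (hS : ⋃ i, S i = Set.univ) {n : ι → ℕ} (hn : ∀ i, (G.induce (S i)).Colorable (n i)) :
    G.Colorable (∑ i, n i) := by
  choose f hf using fun v => Set.mem_iUnion.mp (hS.symm ▸ Set.mem_univ v : v ∈ ⋃ i, S i)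
  have C := fun i => (hn i).some
  have key : ∀ ⦃u v⦄, G.Adj u v → ∀ i j (hu : u ∈ S i) (hv : v ∈ S j),
      (⟨i, C i ⟨u, hu⟩⟩ : Σ i, Fin (n i)) ≠ ⟨j, C j ⟨v, hv⟩⟩ := by
    rintro u v huv i j hu hv h
    obtain ⟨rfl, h⟩ := Sigma.mk.inj_iff.mp h
    exact (C i).valid (show (G.induce (S i)).Adj ⟨u, hu⟩ ⟨v, hv⟩ from huv) (eq_of_heq h)
  simpa using (Coloring.mk (fun v => (⟨f v, C (f v) ⟨v, hf v⟩⟩ : Σ i, Fin (n i)))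
    fun huv => key huv _ _ _ _).colorable

theorem Colorable.of_hom_of_adj_clique {W ι : Type*} [Finite ι] {G : SimpleGraph V}
    {G' : SimpleGraph W} {n : ℕ} (hG : G.Colorable n) (φ : G' →g G) (f : ι → V)
    (hf : Pairwise fun i j => G.Adj (f i) (f j)) (hφf : ∀ w i, G.Adj (φ w) (f i)) :
    G'.Colorable (n - Nat.card ι) := by
  classical
  obtain ⟨C⟩ := hG
  have := Fintype.ofFinite ι
  let C' : G'.Coloring {c // c ∉ Set.range (C ∘ f)} :=
    Coloring.mk (fun w => ⟨C (φ w), fun ⟨i, hi⟩ => C.valid (hφf w i) hi.symm⟩)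
      fun huv heq => C.valid (φ.map_adj huv) (congrArg Subtype.val heq)
  convert C'.colorable
  rw [Fintype.card_subtype_compl, Set.card_range_of_injective
    (C.injective_comp_of_pairwise_adj f hf), Fintype.card_fin, Nat.card_eq_fintype_card]

end SimpleGraph

open Set

section augGraph

variable {V : Type*} {G : SimpleGraph V} {k : ℕ}

theorem inducesTree_augGraph_colorClass (C : G.Coloring (Fin k)) (i : Fin k) :
    InducesTree (augGraph G k) {x | Sum.elim (fun v => C v = i) (· = i) x} := by
  refine isTree_of_forall_adj_center ⟨Sum.inr i, rfl⟩ ?_ ?_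
  · rintro ⟨v | j, hx⟩ hne
    · trivial
    · exact absurd (Subtype.ext (congrArg Sum.inr hx)) hne
  · rintro ⟨u | j, hu⟩ ⟨v | j', hv⟩ huv
    · exact absurd (hu.trans hv.symm) (C.valid huv)
    · exact Or.inr (Subtype.ext (congrArg Sum.inr hv))
    · exact Or.inl (Subtype.ext (congrArg Sum.inr hu))
    · exact Or.inl (Subtype.ext (congrArg Sum.inr hu))

theorem InducesTree.ncard_le_two_and_colorable {S : Set (V ⊕ Fin k)}
    (hS : InducesTree (augGraph G k) S) :
    (Sum.inr ⁻¹' S).ncard ≤ 2 ∧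
      (G.induce (Sum.inl ⁻¹' S)).Colorable (2 - (Sum.inr ⁻¹' S).ncard) := by
  have h2 : ((augGraph G k).induce S).Colorable 2 := IsTree.colorable_two hS
  let f : Sum.inr ⁻¹' S → S := fun j => ⟨Sum.inr j, j.2⟩
  have hf : Pairwise fun i j => ((augGraph G k).induce S).Adj (f i) (f j) :=
    fun _ _ hij => Subtype.coe_ne_coe.mpr hij
  let φ : G.induce (Sum.inl ⁻¹' S) →g (augGraph G k).induce S :=
    ⟨fun v => ⟨Sum.inl v, v.2⟩, id⟩
  exact ⟨h2.card_le_of_pairwise_adj f hf, h2.of_hom_of_adj_clique φ f hf fun _ _ => trivial⟩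

end augGraph

theorem colorable_iff_tree_cover_general
    {V : Type*} (G : SimpleGraph V) (k : ℕ) :
    G.Colorable k ↔
      ∃ Vs : Fin k → Set (V ⊕ Fin k),
        (∀ i, InducesTree (augGraph G k) (Vs i)) ∧ (⋃ i, Vs i) = Set.univ := by
  constructor
  · rintro ⟨C⟩
    refine ⟨fun i => {x | Sum.elim (fun v => C v = i) (· = i) x},
      inducesTree_augGraph_colorClass C, eq_univ_of_forall fun x => mem_iUnion.mpr ?_⟩
    rcases x with v | j
    exacts [⟨C v, rfl⟩, ⟨j, rfl⟩]
  · rintro ⟨Vs, hT, hcov⟩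
    set m := fun i => (Sum.inr ⁻¹' Vs i).ncard
    have hm := fun i => (hT i).ncard_le_two_and_colorable
    have hk : k ≤ ∑ i, m i := by
      simpa [m, ← preimage_iUnion, hcov] using ncard_iUnion_le_of_fintype fun i => Sum.inr ⁻¹' Vs i
    have hsum : ∑ i, (2 - m i) + ∑ i, m i = 2 * k := by
      rw [← Finset.sum_add_distrib, Finset.sum_congr rfl fun i _ => tsub_add_cancel_of_le (hm i).1]
      simp [mul_comm]
    have hG : G.Colorable (∑ i, (2 - m i)) :=
      Colorable.of_iUnion_eq_univ (by rw [← preimage_iUnion, hcov, preimage_univ]) fun i => (hm i).2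
    exact hG.mono (by omega)

/-- `G` admits a proper `k`-coloring iff the vertex set of the join of `G` with the
complete graph on `k` new vertices can be covered by `k` subsets, each inducing a tree. -/
theorem colorable_iff_tree_cover
    {V : Type*} [Fintype V] (G : SimpleGraph V) (k : ℕ) (hk : 1 ≤ k) :
    G.Colorable k ↔
      ∃ Vs : Fin k → Set (V ⊕ Fin k),
        (∀ i, InducesTree (augGraph G k) (Vs i)) ∧ (⋃ i, Vs i) = Set.univ :=
  colorable_iff_tree_cover_general G k
end

section
/- Let G = (V, E) be a finite simple graph, let G̃ be its subdivision graph, and let f̃ be the associated function on the vertices of G̃. If G has a vertex cover consisting of k vertices, then there exist k unimodal functions f_1, …, f_k on G̃ with Σ_{i=1}^{k} f_i(x) = f̃(x) for every vertex x of G̃. -/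
open SimpleGraph

/-- The subdivision graph of `G`: one new midpoint vertex on each edge of `G`,
adjacent exactly to the two endpoints of that edge. -/
def subdivGraph {V : Type*} (G : SimpleGraph V) : SimpleGraph (V ⊕ G.edgeSet) where
  Adj x y :=
    match x, y with
    | Sum.inl v, Sum.inr e => v ∈ (e : Sym2 V)
    | Sum.inr e, Sum.inl v => v ∈ (e : Sym2 V)
    | _, _ => False
  symm := by
    constructor
    rintro (v | e) (w | e2) h
    · exact h.elim
    · exact h
    · exact h
    · exact h.elim
  loopless := by
    constructor
    rintro (v | e) h
    · exact h.elim
    · exact h.elim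

/-- The canonical function on the subdivision graph: the degree on original vertices,
and `1` on midpoint vertices. -/
def ftilde {V : Type*} [Fintype V] (G : SimpleGraph V) [DecidableRel G.Adj] :
    V ⊕ G.edgeSet → NNReal
  | Sum.inl v => (G.degree v : NNReal)
  | Sum.inr _ => 1

/-!
Choose for every edge `e` an endpoint `φ e` in the vertex cover `S`. For `s ∈ S` the function
`f_s` takes the value `deg s` at `s`, the value `1` at the midpoints of the edges assigned to `s`
and at the neighbours of `s` outside `S`, and `0` elsewhere. Its positive superlevel sets are
`∅`, `{s}` or a star of paths of length at most two centred at `s` (a neighbour `v ∉ S` of `s`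
is reached through the midpoint of `s(v, s)`, which is necessarily assigned to `s`), so `f_s` is
unimodal. Summing over `s ∈ S`: a midpoint gets `1` from the endpoint it is assigned to, a
vertex of `S` gets its degree from itself, and a vertex outside `S` gets `1` from each of its
neighbours, all of which lie in `S`.
-/

namespace SimpleGraph

variable {W : Type*}

/-- A cycle has two distinct neighbours of its vertex of maximal rank, both of lower rank. -/
theorem isAcyclic_of_rank {H : SimpleGraph W} (r : W → ℕ)
    (hr : ∀ ⦃v w⦄, H.Adj v w → r v ≠ r w)
    (hlower : ∀ ⦃v w w'⦄, H.Adj v w → H.Adj v w' → r w < r v → r w' < r v → w = w') :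
    H.IsAcyclic := by
  classical
  intro u c hc
  obtain ⟨x, hx, hmax⟩ := c.support.toFinset.exists_max_image r ⟨u, by simp⟩
  rw [List.mem_toFinset] at hx
  obtain ⟨y, z, hyz, hnbr⟩ := Set.ncard_eq_two.mp (hc.ncard_neighborSet_toSubgraph_eq_two hx)
  have lower : ∀ w ∈ c.toSubgraph.neighborSet x, H.Adj x w ∧ r w < r x := fun w hw =>
    have hsupp : w ∈ c.support := c.mem_verts_toSubgraph.mp hw.snd_mem
    ⟨hw.adj_sub, (hmax w (List.mem_toFinset.mpr hsupp)).lt_of_ne (hr hw.adj_sub).symm⟩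
  obtain ⟨hy, hry⟩ := lower y (by simp [hnbr])
  obtain ⟨hz, hrz⟩ := lower z (by simp [hnbr])
  exact hyz (hlower hy hz hry hrz)

theorem IsVertexCover.exists_mem_of_mem_edgeSet {V : Type*} {G : SimpleGraph V} {c : Set V}
    (hc : G.IsVertexCover c) {e : Sym2 V} (he : e ∈ G.edgeSet) : ∃ v ∈ c, v ∈ e := by
  induction e using Sym2.ind with
  | _ u w =>
    rcases hc he with hu | hw
    exacts [⟨u, hu, Sym2.mem_mk_left u w⟩, ⟨w, hw, Sym2.mem_mk_right u w⟩]

theorem degree_pos_of_mem_edgeSet {V : Type*} {G : SimpleGraph V} [Fintype V]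
    [DecidableRel G.Adj] {e : Sym2 V} (he : e ∈ G.edgeSet) {v : V} (hv : v ∈ e) : 0 < G.degree v :=
  Adj.degree_pos_left (G.mem_edgeSet.mp ((Sym2.other_spec hv).symm ▸ he))

end SimpleGraph

theorem inducesTree_singleton {W : Type*} (G : SimpleGraph W) (w : W) : InducesTree G {w} :=
  IsTree.of_subsingleton

theorem unimodalOn_of_inducesTree {W : Type*} {G : SimpleGraph W} {T : Set W} {h : W}
    {f : W → NNReal} {b : NNReal} (hT : InducesTree G T)
    (hoff : ∀ x ∉ T, f x = 0) (hplateau : ∀ x ∈ T, x ≠ h → f x = b)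
    (hpeak : ∀ x ∈ T, f x ≤ f h) : UnimodalOn G f := by
  intro c hc
  have hzero : ∀ x ∉ T, ¬ c ≤ f x := fun x hxT hx => hc.not_ge (hoff x hxT ▸ hx)
  by_cases hch : c ≤ f h
  · right
    by_cases hcb : c ≤ b
    · convert hT using 1
      ext x
      refine ⟨fun hx => not_not.mp fun hxT => hzero x hxT hx, fun hx => ?_⟩
      by_cases hxh : x = h
      · exact hxh ▸ hch
      · show c ≤ f x
        rw [hplateau x hx hxh]
        exact hcb
    · convert inducesTree_singleton G h using 1
      ext x
      refine ⟨fun hx => ?_, fun hx => (Set.mem_singleton_iff.mp hx) ▸ hch⟩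
      by_contra hxh
      by_cases hxT : x ∈ T
      · exact hcb ((hplateau x hxT hxh) ▸ hx)
      · exact hzero x hxT hx
  · left
    ext x
    refine ⟨fun hx => hch ?_, False.elim⟩
    by_cases hxT : x ∈ T
    · exact le_trans hx (hpeak x hxT)
    · exact absurd hx (hzero x hxT)

section Subdivision

variable {V : Type*} {G : SimpleGraph V}

@[simp] theorem subdivGraph_adj_inl_inr (v : V) (e : G.edgeSet) :
    (subdivGraph G).Adj (Sum.inl v) (Sum.inr e) ↔ v ∈ (e : Sym2 V) := Iff.rfl

@[simp] theorem subdivGraph_adj_inr_inl (v : V) (e : G.edgeSet) :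
    (subdivGraph G).Adj (Sum.inr e) (Sum.inl v) ↔ v ∈ (e : Sym2 V) := Iff.rfl

@[simp] theorem subdivGraph_not_adj_inl_inl (v w : V) :
    ¬ (subdivGraph G).Adj (Sum.inl v) (Sum.inl w) := id

@[simp] theorem subdivGraph_not_adj_inr_inr (e e' : G.edgeSet) :
    ¬ (subdivGraph G).Adj (Sum.inr e) (Sum.inr e') := id

variable (φ : G.edgeSet → V) (S : Finset V)

def subdivStar (s : V) : Set (V ⊕ G.edgeSet) :=
  {x | Sum.elim (fun v => v = s ∨ v ∉ S ∧ G.Adj v s) (fun e => φ e = s) x}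

variable {φ S}

theorem apply_eq_of_notMem (hφS : ∀ e, φ e ∈ S) (hφe : ∀ e : G.edgeSet, φ e ∈ (e : Sym2 V))
    {v s : V} (hvS : v ∉ S) (hvs : G.Adj v s) : φ ⟨s(v, s), hvs⟩ = s :=
  (Sym2.mem_iff.mp (hφe _)).resolve_left fun h => hvS (h ▸ hφS _)

theorem inducesTree_subdivStar (hφS : ∀ e, φ e ∈ S) (hφe : ∀ e : G.edgeSet, φ e ∈ (e : Sym2 V))
    (s : V) :
    InducesTree (subdivGraph G) (subdivStar φ S s) := by
  set T := subdivStar φ S s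
  have hub : Sum.inl s ∈ T := Or.inl rfl
  refine ⟨(connected_iff_exists_forall_reachable _).mpr ⟨⟨_, hub⟩, ?_⟩, ?_⟩
  · have spoke : ∀ e (he : Sum.inr e ∈ T), (induce T (subdivGraph G)).Adj ⟨_, hub⟩ ⟨_, he⟩ :=
      fun e he => induce_adj.mpr ((show φ e = s from he) ▸ hφe e)
    rintro ⟨v | e, hx⟩
    · rcases hx with rfl | ⟨hvS, hvs⟩
      · rfl
      · have he : Sum.inr ⟨s(v, s), hvs⟩ ∈ T := apply_eq_of_notMem hφS hφe hvS hvs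
        exact (spoke _ he).reachable.trans
          (Adj.reachable (induce_adj.mpr (Sym2.mem_mk_left v s)))
    · exact (spoke e hx).reachable
  · classical
    refine isAcyclic_of_rank
      (fun x => Sum.elim (fun v => if v = s then 0 else 2) (fun _ => 1) x.1) ?_ ?_
    · rintro ⟨v | e, _⟩ ⟨w | e', _⟩ hadj <;>
        simp only [induce_adj, subdivGraph_not_adj_inl_inl, subdivGraph_not_adj_inr_inr] at hadj
      all_goals simp only [Sum.elim_inl, Sum.elim_inr]; split_ifs <;> omega
    · rintro ⟨v | e, hx⟩ ⟨w | e₁, hw⟩ ⟨w' | e₂, hw'⟩ h h' hr hr' <;>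
        simp only [induce_adj, subdivGraph_not_adj_inl_inl, subdivGraph_not_adj_inr_inr] at h h'
      · by_cases hvs : v = s
        · simp [hvs] at hr
        · have hv : v ∈ (e₁ : Sym2 V) := h
          have hv' : v ∈ (e₂ : Sym2 V) := h'
          have hs : s ∈ (e₁ : Sym2 V) := (show φ e₁ = s from hw) ▸ hφe e₁
          have hs' : s ∈ (e₂ : Sym2 V) := (show φ e₂ = s from hw') ▸ hφe e₂
          have : e₁ = e₂ := Subtype.ext <| ((Sym2.mem_and_mem_iff hvs).mp ⟨hv, hs⟩).trans
            ((Sym2.mem_and_mem_iff hvs).mp ⟨hv', hs'⟩).symm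
          subst this; rfl
      · simp only [Sum.elim_inl, Sum.elim_inr] at hr hr'
        split_ifs at hr hr' with hw hw' <;> first | omega | (subst hw hw'; rfl)

variable [Fintype V] [DecidableEq V] [DecidableRel G.Adj]

variable (φ S) in
def subdivStarWeight (s : V) : V ⊕ G.edgeSet → NNReal :=
  Sum.elim (fun v => if v = s then (G.degree v : NNReal) else if v ∉ S ∧ G.Adj v s then 1 else 0)
    (fun e => if φ e = s then 1 else 0)

theorem unimodalOn_subdivStarWeight (hφS : ∀ e, φ e ∈ S)
    (hφe : ∀ e : G.edgeSet, φ e ∈ (e : Sym2 V)) (s : V) :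
    UnimodalOn (subdivGraph G) (subdivStarWeight φ S s) := by
  refine unimodalOn_of_inducesTree (h := Sum.inl s) (b := 1)
    (inducesTree_subdivStar hφS hφe s) ?_ ?_ ?_
  · rintro (v | e) hx <;> simp_all [subdivStar, subdivStarWeight]
  · rintro (v | e) hx hxs <;> simp_all [subdivStar, subdivStarWeight]
  · rintro (v | e) hx
    · rcases hx with rfl | ⟨hvS, hvs⟩
      · exact le_rfl
      · simpa [subdivStarWeight, hvs.ne, hvS, hvs] using
          Nat.succ_le_of_lt hvs.symm.degree_pos_left
    · have hs : φ e = s := hx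
      simpa [subdivStarWeight, hs] using
        Nat.succ_le_of_lt (degree_pos_of_mem_edgeSet e.2 (hs ▸ hφe e))

theorem sum_subdivStarWeight (hS : G.IsVertexCover S) (hφS : ∀ e, φ e ∈ S)
    (x : V ⊕ G.edgeSet) :
    ∑ s ∈ S, subdivStarWeight φ S s x = ftilde G x := by
  rcases x with v | e
  · by_cases hvS : v ∈ S
    · simp [subdivStarWeight, ftilde, hvS, Finset.sum_ite_eq]
    · have hneighbors : S.filter (G.Adj v) = G.neighborFinset v := by
        ext w
        simpa using fun hvw => (hS hvw).resolve_left hvS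
      have hne : ∀ s ∈ S, v ≠ s := fun s hs hvs => hvS (hvs ▸ hs)
      simp [subdivStarWeight, ftilde, hvS, Finset.sum_ite_of_false hne, Finset.sum_boole,
        hneighbors]
  · simp [subdivStarWeight, ftilde, hφS, Finset.sum_ite_eq]

end Subdivision

/-- If `G` has a vertex cover of `k` vertices, then the canonical function on the
subdivision graph of `G` has a unimodal decomposition into `k` components. -/
theorem vertexCover_imp_unimodal_decomposition
    {V : Type*} [Fintype V] [DecidableEq V] (G : SimpleGraph V) [DecidableRel G.Adj]
    (k : ℕ) (S : Finset V)
    (hcov : ∀ u w, G.Adj u w → u ∈ S ∨ w ∈ S) (hcard : S.card = k) :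
    ∃ f : Fin k → (V ⊕ G.edgeSet) → NNReal,
      (∀ i, UnimodalOn (subdivGraph G) (f i)) ∧
      ∀ x, ∑ i, f i x = ftilde G x := by
  have hS : G.IsVertexCover S := fun u w huw => hcov u w huw
  choose φ hφS hφe using fun e : G.edgeSet => hS.exists_mem_of_mem_edgeSet e.2
  let σ : Fin k ≃ S := (S.equivFinOfCardEq hcard).symm
  refine ⟨fun i => subdivStarWeight φ S (σ i),
    fun i => unimodalOn_subdivStarWeight hφS hφe (σ i), fun x => ?_⟩
  rw [← sum_subdivStarWeight hS hφS x, ← Finset.sum_coe_sort S]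
  exact Equiv.sum_comp σ (fun s => subdivStarWeight φ S s x)
end

section
/- Let G = (V, E) be a finite simple graph, let G̃ be its subdivision graph with associated function f̃, and let F = {f_1, …, f_k} be unimodal functions on G̃ with Σ_{i=1}^{k} f_i = f̃. Let v ∈ V be a vertex with deg_G(v) ≥ 1 that is not a mode of any function in F, and for each edge e of G incident to v let F^v_e = {f ∈ F | f(m_e) ≥ f(v) and f(v) ≥ f(m_{e'}) for every other edge e' of G incident to v}. Then for every edge e incident to v and every f ∈ F^v_e, one has f(m_{e'}) = 0 for every edge e' ≠ e of G incident to v. -/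
open SimpleGraph

/-- The family `F^v_e`: indices of those components whose value at the midpoint of `e` is
at least the value at `v`, and whose value at `v` is at least the value at the midpoint of
every other edge incident to `v`. -/
def Fve {V : Type*} (G : SimpleGraph V) {k : ℕ} (f : Fin k → (V ⊕ G.edgeSet) → NNReal)
    (v : V) (e : G.edgeSet) : Set (Fin k) :=
  {i | f i (Sum.inl v) ≤ f i (Sum.inr e) ∧
    ∀ e2 : G.edgeSet, v ∈ (e2 : Sym2 V) → e2 ≠ e → f i (Sum.inr e2) ≤ f i (Sum.inl v)}

/-! For a component `fᵢ` and a vertex `v` that is not one of its modes, the superlevel set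
`{fᵢ ≥ fᵢ(v)}` is a tree containing `v` and a point above `v`, so some neighbour of `v` in the
subdivision, i.e. some midpoint `m_e` with `e ∋ v`, satisfies `fᵢ(m_e) ≥ fᵢ(v)`. Hence
`fᵢ(v) ≤ ∑_{e ∋ v} fᵢ(m_e)`. Summed over `i`, both sides equal `deg v`, so each of these
inequalities is an equality. For `i ∈ F^v_e` and `e' ≠ e` this gives
`fᵢ(v) + fᵢ(m_{e'}) ≤ fᵢ(m_e) + fᵢ(m_{e'}) ≤ fᵢ(v)`, so `fᵢ(m_{e'}) = 0`. -/

namespace UnimodalOn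

variable {V : Type*} {G : SimpleGraph V} {f : V → NNReal}

theorem exists_adj_le_of_lt (hf : UnimodalOn G f) {x z : V} (hx : 0 < f x) (hxz : f x < f z) :
    ∃ y, G.Adj x y ∧ f x ≤ f y := by
  have hxS : x ∈ {v | f x ≤ f v} := le_refl (f x)
  obtain hempty | htree := hf (f x) hx
  · simp [hempty] at hxS
  have : Nontrivial {v | f x ≤ f v} :=
    nontrivial_of_ne ⟨x, hxS⟩ ⟨z, hxz.le⟩ fun h ↦ hxz.ne (congrArg (f ∘ Subtype.val) h)
  obtain ⟨⟨y, hyS⟩, hxy⟩ := htree.connected.preconnected.exists_adj_of_nontrivial ⟨x, hxS⟩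
  exact ⟨y, hxy, hyS⟩

end UnimodalOn

section Subdivision

variable {V : Type*} [Fintype V] [DecidableEq V] {G : SimpleGraph V} [DecidableRel G.Adj]

variable (G) in
def incidentEdges (v : V) : Finset G.edgeSet := {e | v ∈ (e : Sym2 V)}

@[simp]
theorem mem_incidentEdges {v : V} {e : G.edgeSet} :
    e ∈ incidentEdges G v ↔ v ∈ (e : Sym2 V) := by
  simp [incidentEdges]

theorem card_incidentEdges (v : V) : (incidentEdges G v).card = G.degree v := by
  rw [← card_incidenceFinset_eq_degree, ← Finset.card_map (Function.Embedding.subtype _)]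
  congr 1
  ext e
  simp [mem_incidenceFinset, incidenceSet, and_comm]

theorem exists_mem_incidentEdges_of_subdivGraph_adj {v : V} {y : V ⊕ G.edgeSet}
    (h : (subdivGraph G).Adj (Sum.inl v) y) : ∃ e ∈ incidentEdges G v, y = Sum.inr e := by
  rcases y with u | e
  · exact h.elim
  · exact ⟨e, mem_incidentEdges.2 h, rfl⟩

theorem UnimodalOn.apply_inl_le_sum_incidentEdges {g : V ⊕ G.edgeSet → NNReal}
    (hg : UnimodalOn (subdivGraph G) g) {v : V} (hv : ¬ ∀ y, g y ≤ g (Sum.inl v)) :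
    g (Sum.inl v) ≤ ∑ e ∈ incidentEdges G v, g (Sum.inr e) := by
  rcases eq_zero_or_pos (g (Sum.inl v)) with h0 | hpos
  · simp [h0]
  obtain ⟨z, hz⟩ := not_forall.1 hv
  obtain ⟨y, hvy, hle⟩ := hg.exists_adj_le_of_lt hpos (not_le.1 hz)
  obtain ⟨e, he, rfl⟩ := exists_mem_incidentEdges_of_subdivGraph_adj hvy
  exact hle.trans (Finset.single_le_sum (f := fun e ↦ g (Sum.inr e)) (fun _ _ ↦ zero_le) he)

variable {ι : Type*} [Fintype ι] {f : ι → V ⊕ G.edgeSet → NNReal}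

theorem sum_apply_inl_eq_sum_sum_incidentEdges (hsum : ∀ x, ∑ i, f i x = ftilde G x) (v : V) :
    ∑ i, f i (Sum.inl v) = ∑ i, ∑ e ∈ incidentEdges G v, f i (Sum.inr e) := by
  rw [Finset.sum_comm, hsum]
  simp [hsum, ftilde, card_incidentEdges]

theorem apply_inl_eq_sum_incidentEdges (hf : ∀ i, UnimodalOn (subdivGraph G) (f i))
    (hsum : ∀ x, ∑ i, f i x = ftilde G x) {v : V} (hmode : ∀ i, ¬ ∀ y, f i y ≤ f i (Sum.inl v))
    (i : ι) : f i (Sum.inl v) = ∑ e ∈ incidentEdges G v, f i (Sum.inr e) :=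
  (Finset.sum_eq_sum_iff_of_le fun j _ ↦ (hf j).apply_inl_le_sum_incidentEdges (hmode j)).1
    (sum_apply_inl_eq_sum_sum_incidentEdges hsum v) i (Finset.mem_univ i)

end Subdivision

theorem modeless_vertex_components_vanish_on_other_edges_general
    {V : Type*} [Fintype V] (G : SimpleGraph V) [DecidableRel G.Adj]
    (k : ℕ) (f : Fin k → (V ⊕ G.edgeSet) → NNReal)
    (hf : ∀ i, UnimodalOn (subdivGraph G) (f i))
    (hsum : ∀ x, ∑ i, f i x = ftilde G x)
    (v : V)
    (hmode : ∀ i, ¬ ∀ y, f i y ≤ f i (Sum.inl v)) :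
    ∀ e : G.edgeSet, v ∈ (e : Sym2 V) → ∀ i ∈ Fve G f v e,
      ∀ e2 : G.edgeSet, v ∈ (e2 : Sym2 V) → e2 ≠ e → f i (Sum.inr e2) = 0 := by
  classical
  intro e he i hi e2 he2 hne
  have hle : f i (Sum.inl v) + f i (Sum.inr e2) ≤ f i (Sum.inl v) + 0 :=
    calc f i (Sum.inl v) + f i (Sum.inr e2)
        ≤ f i (Sum.inr e) + f i (Sum.inr e2) := add_le_add_left hi.1 _
      _ ≤ ∑ e' ∈ incidentEdges G v, f i (Sum.inr e') :=
          Finset.add_le_sum (f := fun e ↦ f i (Sum.inr e)) (fun _ _ ↦ zero_le)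
            (mem_incidentEdges.2 he) (mem_incidentEdges.2 he2) hne.symm
      _ = f i (Sum.inl v) + 0 := by rw [add_zero, apply_inl_eq_sum_incidentEdges hf hsum hmode]
  exact nonpos_iff_eq_zero.1 (le_of_add_le_add_left hle)

/-- If `v` is a vertex of positive degree that is not a mode of any component of a
unimodal decomposition of the canonical function on the subdivision graph, then every
component in `F^v_e` vanishes at the midpoint of every other edge incident to `v`. -/
theorem modeless_vertex_components_vanish_on_other_edges
    {V : Type*} [Fintype V] [DecidableEq V] (G : SimpleGraph V) [DecidableRel G.Adj]
    (k : ℕ) (f : Fin k → (V ⊕ G.edgeSet) → NNReal)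
    (hf : ∀ i, UnimodalOn (subdivGraph G) (f i))
    (hsum : ∀ x, ∑ i, f i x = ftilde G x)
    (v : V) (hdeg : 1 ≤ G.degree v)
    (hmode : ∀ i, ¬ ∀ y, f i y ≤ f i (Sum.inl v)) :
    ∀ e : G.edgeSet, v ∈ (e : Sym2 V) → ∀ i ∈ Fve G f v e,
      ∀ e2 : G.edgeSet, v ∈ (e2 : Sym2 V) → e2 ≠ e → f i (Sum.inr e2) = 0 :=
  modeless_vertex_components_vanish_on_other_edges_general G k f hf hsum v hmode
end
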